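/- arXiv:2406.12056 — 8 statements merged into one kernel-verified Lean document; each statement's English description precedes it below -/
import Mathlib

section
/- (Decoder-based / Barber–Agakov lower bound, Eq. (2) first line). For every family q : S → T → ℝ such that for each z ∈ S the function q(z,·) is a strictly positive pmf on T, the mutual information satisfies I(p) ≥ Σ_{(z,y)} p(z,y)·log(q(z,y)) + H(pT). -/
open Finset

variable {S T : Type*}

/-- Marginal of the joint pmf `p` on the first coordinate: `pS(z) = Σ_y p(z,y)`. -/
noncomputable def margS [Fintype T] (p : S × T → ℝ) (z : S) : ℝ := ∑ y, p (z, y)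

/-- Marginal of the joint pmf `p` on the second coordinate: `pT(y) = Σ_z p(z,y)`. -/
noncomputable def margT [Fintype S] (p : S × T → ℝ) (y : T) : ℝ := ∑ z, p (z, y)

/-- Mutual information `I(p) = Σ_{(z,y)} p(z,y)·log(p(z,y)/(pS(z)·pT(y)))`. -/
noncomputable def mutInfo [Fintype S] [Fintype T] (p : S × T → ℝ) : ℝ :=
  ∑ z, ∑ y, p (z, y) * Real.log (p (z, y) / (margS p z * margT p y))

/-- Entropy of the marginal `pT`: `H(pT) = −Σ_y pT(y)·log pT(y)`. -/
noncomputable def entropyT [Fintype S] [Fintype T] (p : S × T → ℝ) : ℝ :=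
  -∑ y, margT p y * Real.log (margT p y)

/-- Kullback–Leibler divergence on a finite type: `KL(u‖v) = Σ_x u(x)·log(u(x)/v(x))`. -/
noncomputable def klFin {α : Type*} [Fintype α] (u v : α → ℝ) : ℝ :=
  ∑ x, u x * Real.log (u x / v x)

/-- Conditional pmf on `T` given `z`: `p(·|z)(y) = p(z,y)/pS(z)`. -/
noncomputable def condT [Fintype T] (p : S × T → ℝ) (z : S) (y : T) : ℝ :=
  p (z, y) / margS p z

/-- Partition function of a critic `h`: `Z̃(z) = Σ_y pT(y)·exp(h(z,y))`. -/
noncomputable def partFun [Fintype S] [Fintype T] (p : S × T → ℝ) (h : S × T → ℝ) (z : S) : ℝ :=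
  ∑ y, margT p y * Real.exp (h (z, y))

/-- Decoder-based (unnormalized Barber–Agakov) lower bound
`I_DLB = Σ_{(z,y)} p(z,y)·h(z,y) − Σ_z pS(z)·log Z̃(z)`. -/
noncomputable def IDLB [Fintype S] [Fintype T] (p h : S × T → ℝ) : ℝ :=
  (∑ z, ∑ y, p (z, y) * h (z, y)) - ∑ z, margS p z * Real.log (partFun p h z)

/-- Monte Carlo estimator of the partition function from a positive sample `y`
and `K − 1 = n` negatives `ys`: `m(z; y, ys) = (1/K)·(e^{h(z,y)} + Σ_i e^{h(z,ys_i)})`,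
with `K = n + 1`. -/
noncomputable def mEst (h : S × T → ℝ) (n : ℕ) (z : S) (y : T) (ys : Fin n → T) : ℝ :=
  (Real.exp (h (z, y)) + ∑ i, Real.exp (h (z, ys i))) / (n + 1)

/-- InfoNCE bound with `K = n + 1` samples:
`I_NCE(K) = Σ_{(z,y)} Σ_{ys} p(z,y)·ΠpT(ys)·log( e^{h(z,y)} / m(z; y, ys) )`. -/
noncomputable def INCE [Fintype S] [Fintype T] (p h : S × T → ℝ) (n : ℕ) : ℝ :=
  ∑ z, ∑ y, ∑ ys : Fin n → T,
    p (z, y) * (∏ i, margT p (ys i)) *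
      Real.log (Real.exp (h (z, y)) / mEst h n z y ys)

/-! The gap between the two sides is the Kullback–Leibler divergence of `p` from the joint pmf
`pS(z)·q(z,y)` obtained by decoding `y` from `z` with `q`; both have total mass `Σ p`, so the gap
is nonnegative by Gibbs' inequality. -/

open InformationTheory

theorem sub_le_mul_log_div {u v : ℝ} (hu : 0 ≤ u) (hv : 0 < v) :
    u - v ≤ u * Real.log (u / v) := by
  have gap : u * Real.log (u / v) - (u - v) = v * klFun (u / v) := by
    rw [klFun_apply]
    field_simp
    ring
  have := mul_nonneg hv.le (klFun_nonneg (div_nonneg hu hv.le))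
  linarith

theorem klFin_nonneg {α : Type*} [Fintype α] (u v : α → ℝ) (hu : ∀ x, 0 ≤ u x)
    (hv : ∀ x, 0 < v x) (hmass : ∑ x, v x ≤ ∑ x, u x) : 0 ≤ klFin u v :=
  calc 0 ≤ ∑ x, (u x - v x) := by rw [sum_sub_distrib]; linarith
    _ ≤ klFin u v := sum_le_sum fun x _ => sub_le_mul_log_div (hu x) (hv x)

theorem margS_pos [Fintype T] {p : S × T → ℝ} (hp_pos : ∀ x, 0 < p x) (z : S) (y : T) :
    0 < margS p z :=
  (hp_pos (z, y)).trans_le (single_le_sum (fun y' _ => (hp_pos (z, y')).le) (mem_univ y))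

theorem margT_pos [Fintype S] {p : S × T → ℝ} (hp_pos : ∀ x, 0 < p x) (z : S) (y : T) :
    0 < margT p y :=
  (hp_pos (z, y)).trans_le (single_le_sum (fun z' _ => (hp_pos (z', y)).le) (mem_univ z))

theorem sum_margT_mul [Fintype S] [Fintype T] (p : S × T → ℝ) (f : T → ℝ) :
    ∑ y, margT p y * f y = ∑ z, ∑ y, p (z, y) * f y := by
  rw [sum_comm]
  simp only [margT, sum_mul]

noncomputable def decoderJoint [Fintype T] (p : S × T → ℝ) (q : S → T → ℝ) (x : S × T) :
    ℝ :=
  margS p x.1 * q x.1 x.2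

theorem decoderJoint_pos [Fintype T] {p : S × T → ℝ} (hp_pos : ∀ x, 0 < p x)
    {q : S → T → ℝ} (hq_pos : ∀ z y, 0 < q z y) (x : S × T) : 0 < decoderJoint p q x :=
  mul_pos (margS_pos hp_pos x.1 x.2) (hq_pos x.1 x.2)

theorem sum_decoderJoint [Fintype S] [Fintype T] (p : S × T → ℝ) {q : S → T → ℝ}
    (hq_sum : ∀ z, ∑ y, q z y = 1) :
    ∑ x, decoderJoint p q x = ∑ x, p x := by
  simp only [Fintype.sum_prod_type, decoderJoint, ← mul_sum, hq_sum, mul_one, margS]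

theorem mutInfo_sub_eq_klFin_decoderJoint [Fintype S] [Fintype T] {p : S × T → ℝ}
    (hp_pos : ∀ x, 0 < p x) {q : S → T → ℝ} (hq_pos : ∀ z y, 0 < q z y) :
    mutInfo p - ((∑ z, ∑ y, p (z, y) * Real.log (q z y)) + entropyT p) =
      klFin p (decoderJoint p q) := by
  rw [mutInfo, entropyT, sum_margT_mul, klFin, Fintype.sum_prod_type, sub_add_eq_sub_sub,
    sub_neg_eq_add, ← sum_sub_distrib, ← sum_add_distrib]
  refine sum_congr rfl fun z _ => ?_
  rw [← sum_sub_distrib, ← sum_add_distrib]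
  refine sum_congr rfl fun y _ => ?_
  have hpzy := hp_pos (z, y)
  have hS := margS_pos hp_pos z y
  have hT := margT_pos hp_pos z y
  have hq := hq_pos z y
  rw [decoderJoint, Real.log_div hpzy.ne' (mul_pos hS hT).ne',
    Real.log_div hpzy.ne' (mul_pos hS hq).ne', Real.log_mul hS.ne' hT.ne',
    Real.log_mul hS.ne' hq.ne']
  ring

theorem decoder_lower_bound_general [Fintype S] [Fintype T]
    (p : S × T → ℝ) (hp_pos : ∀ x, 0 < p x)
    (q : S → T → ℝ) (hq_pos : ∀ z y, 0 < q z y) (hq_sum : ∀ z, ∑ y, q z y = 1) :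
    mutInfo p ≥ (∑ z, ∑ y, p (z, y) * Real.log (q z y)) + entropyT p := by
  have gap_nonneg : 0 ≤ klFin p (decoderJoint p q) :=
    klFin_nonneg _ _ (fun x => (hp_pos x).le) (decoderJoint_pos hp_pos hq_pos)
      (sum_decoderJoint p hq_sum).le
  rw [← mutInfo_sub_eq_klFin_decoderJoint hp_pos hq_pos] at gap_nonneg
  linarith

/-- Decoder-based / Barber–Agakov lower bound. -/
theorem decoder_lower_bound [Fintype S] [Fintype T] [Nonempty S] [Nonempty T]
    (p : S × T → ℝ) (hp_pos : ∀ x, 0 < p x) (hp_sum : ∑ x, p x = 1)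
    (q : S → T → ℝ) (hq_pos : ∀ z y, 0 < q z y) (hq_sum : ∀ z, ∑ y, q z y = 1) :
    mutInfo p ≥ (∑ z, ∑ y, p (z, y) * Real.log (q z y)) + entropyT p :=
  decoder_lower_bound_general p hp_pos q hq_pos hq_sum
end

section
/- (Unnormalized Barber–Agakov bound). For every critic h : S × T → ℝ, the mutual information satisfies I(p) ≥ Σ_{(z,y)} p(z,y)·h(z,y) − Σ_z pS(z)·log Z̃(z). -/
open Finset

variable {S T : Type*}

/-- Unnormalized Barber–Agakov bound. -/
theorem unnormalized_BA_bound [Fintype S] [Fintype T] [Nonempty S] [Nonempty T]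
    (p : S × T → ℝ) (hp_pos : ∀ x, 0 < p x) (hp_sum : ∑ x, p x = 1)
    (h : S × T → ℝ) :
    mutInfo p ≥
      (∑ z, ∑ y, p (z, y) * h (z, y)) - ∑ z, margS p z * Real.log (partFun p h z) := by
  have hpS : ∀ z, 0 < margS p z := fun z =>
    Finset.sum_pos (fun y _ => hp_pos (z, y)) Finset.univ_nonempty
  have hpT : ∀ y, 0 < margT p y := fun y =>
    Finset.sum_pos (fun z _ => hp_pos (z, y)) Finset.univ_nonempty
  have hZ : ∀ z, 0 < partFun p h z := fun z =>
    Finset.sum_pos (fun y _ => mul_pos (hpT y) (Real.exp_pos _)) Finset.univ_nonempty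
  set v : S × T → ℝ := fun x => margS p x.1 * margT p x.2 * Real.exp (h x) / partFun p h x.1
    with hv
  have hv_pos : ∀ x, 0 < v x := fun x =>
    div_pos (mul_pos (mul_pos (hpS _) (hpT _)) (Real.exp_pos _)) (hZ _)
  have hv_sum : ∑ x, v x = 1 := by
    rw [Fintype.sum_prod_type]
    have : ∀ z : S, ∑ y, v (z, y) = margS p z := by
      intro z
      have : ∑ y, v (z, y)
          = (margS p z / partFun p h z) * ∑ y, margT p y * Real.exp (h (z, y)) := by
        rw [Finset.mul_sum]
        refine Finset.sum_congr rfl fun y _ => ?_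
        simp only [hv]
        field_simp
      rw [this]
      have hZ' : (∑ y, margT p y * Real.exp (h (z, y))) ≠ 0 := (hZ z).ne'
      simp only [partFun]
      field_simp
    rw [Finset.sum_congr rfl fun z _ => this z]
    rw [← hp_sum, Fintype.sum_prod_type]
    rfl
  -- Gibbs: ∑ p log (p/v) ≥ 0
  have gibbs : 0 ≤ ∑ x, p x * Real.log (p x / v x) := by
    have key : ∀ x : S × T, p x - v x ≤ p x * Real.log (p x / v x) := by
      intro x
      have h1 : Real.log (v x / p x) ≤ v x / p x - 1 :=
        Real.log_le_sub_one_of_pos (div_pos (hv_pos x) (hp_pos x))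
      have h2 : Real.log (p x / v x) = - Real.log (v x / p x) := by
        rw [← Real.log_inv]; congr 1
        rw [inv_div]
      nlinarith [mul_le_mul_of_nonneg_left h1 (hp_pos x).le,
        mul_div_cancel₀ (v x) (hp_pos x).ne', (hp_pos x).le]
    calc (0:ℝ) = ∑ x, p x - ∑ x, v x := by rw [hp_sum, hv_sum]; ring
    _ = ∑ x, (p x - v x) := by rw [Finset.sum_sub_distrib]
    _ ≤ _ := Finset.sum_le_sum fun x _ => key x
  -- rewrite the difference as ∑ p log (p/v)
  have hdiff : mutInfo p
      - ((∑ z, ∑ y, p (z, y) * h (z, y)) - ∑ z, margS p z * Real.log (partFun p h z))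
      = ∑ x, p x * Real.log (p x / v x) := by
    have hZterm : ∀ z : S, margS p z * Real.log (partFun p h z)
        = ∑ y, p (z, y) * Real.log (partFun p h z) := by
      intro z
      rw [margS, Finset.sum_mul]
    rw [mutInfo, Fintype.sum_prod_type]
    rw [Finset.sum_congr rfl fun z _ => hZterm z]
    rw [← Finset.sum_sub_distrib]
    simp only [← Finset.sum_sub_distrib, ← Finset.sum_add_distrib, sub_sub, ← sub_add]
    refine Finset.sum_congr rfl fun z _ => Finset.sum_congr rfl fun y _ => ?_
    have hlogv : Real.log (v (z, y)) = Real.log (margS p z) + Real.log (margT p y)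
        + h (z, y) - Real.log (partFun p h z) := by
      simp only [hv]
      rw [Real.log_div (mul_pos (mul_pos (hpS z) (hpT y)) (Real.exp_pos _)).ne' (hZ z).ne',
        Real.log_mul (mul_pos (hpS z) (hpT y)).ne' (Real.exp_pos _).ne',
        Real.log_mul (hpS z).ne' (hpT y).ne', Real.log_exp]
    have hlog1 : Real.log (p (z, y) / (margS p z * margT p y))
        = Real.log (p (z, y)) - (Real.log (margS p z) + Real.log (margT p y)) := by
      rw [Real.log_div (hp_pos _).ne' (mul_pos (hpS z) (hpT y)).ne',
        Real.log_mul (hpS z).ne' (hpT y).ne']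
    have hlog2 : Real.log (p (z, y) / v (z, y))
        = Real.log (p (z, y)) - Real.log (v (z, y)) :=
      Real.log_div (hp_pos _).ne' (hv_pos _).ne'
    rw [hlog1, hlog2, hlogv]
    ring
  linarith [gibbs, hdiff.symm ▸ gibbs]
end

section
/- (Tractable lower bound via a variational normalizer, TUBA step of the proof). For every critic h : S × T → ℝ and every a : S → ℝ with a(z) > 0 for all z, one has Σ_z pS(z)·log Z̃(z) ≤ Σ_z pS(z)·(Z̃(z)/a(z) + log a(z) − 1); consequently I_DLB ≥ Σ_{(z,y)} p(z,y)·h(z,y) − Σ_z pS(z)·(Z̃(z)/a(z) + log a(z) − 1), and hence I(p) is bounded below by this last expression. -/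
open Finset

variable {S T : Type*}

/-- Tractable lower bound via a variational normalizer, TUBA step. -/
theorem tuba_bound [Fintype S] [Fintype T] [Nonempty S] [Nonempty T]
    (p : S × T → ℝ) (hp_pos : ∀ x, 0 < p x) (hp_sum : ∑ x, p x = 1)
    (h : S × T → ℝ) (a : S → ℝ) (ha : ∀ z, 0 < a z) :
    (∑ z, margS p z * Real.log (partFun p h z) ≤
        ∑ z, margS p z * (partFun p h z / a z + Real.log (a z) - 1)) ∧
    (IDLB p h ≥
        (∑ z, ∑ y, p (z, y) * h (z, y)) -
          ∑ z, margS p z * (partFun p h z / a z + Real.log (a z) - 1)) ∧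
    (mutInfo p ≥
        (∑ z, ∑ y, p (z, y) * h (z, y)) -
          ∑ z, margS p z * (partFun p h z / a z + Real.log (a z) - 1)) := by
  have hmargS : ∀ z, 0 < margS p z := fun z =>
    Finset.sum_pos (fun y _ => hp_pos _) Finset.univ_nonempty
  have hmargT : ∀ y, 0 < margT p y := fun y =>
    Finset.sum_pos (fun z _ => hp_pos _) Finset.univ_nonempty
  have hZ : ∀ z, 0 < partFun p h z := fun z =>
    Finset.sum_pos (fun y _ => mul_pos (hmargT y) (Real.exp_pos _)) Finset.univ_nonempty
  have part1 : ∑ z, margS p z * Real.log (partFun p h z) ≤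
      ∑ z, margS p z * (partFun p h z / a z + Real.log (a z) - 1) := by
    apply Finset.sum_le_sum
    intro z _
    apply mul_le_mul_of_nonneg_left _ (hmargS z).le
    have h1 : Real.log (partFun p h z / a z) ≤ partFun p h z / a z - 1 :=
      Real.log_le_sub_one_of_pos (div_pos (hZ z) (ha z))
    rw [Real.log_div (hZ z).ne' (ha z).ne'] at h1
    linarith
  have part2 : IDLB p h ≥
      (∑ z, ∑ y, p (z, y) * h (z, y)) -
        ∑ z, margS p z * (partFun p h z / a z + Real.log (a z) - 1) := by
    unfold IDLB; linarith
  refine ⟨part1, part2, le_trans part2 ?_⟩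
  -- mutInfo ≥ IDLB
  have key : IDLB p h ≤ mutInfo p := by
    unfold IDLB mutInfo
    rw [sub_le_iff_le_add, ← Finset.sum_add_distrib]
    apply Finset.sum_le_sum
    intro z _
    set Z := partFun p h z with hZdef
    have hZne : Z ≠ 0 := (hZ z).ne'
    have perY : ∀ y : T,
        p (z, y) * h (z, y) ≤
          p (z, y) * Real.log (p (z, y) / (margS p z * margT p y)) +
            p (z, y) * Real.log Z +
            (margS p z * margT p y * Real.exp (h (z, y)) / Z - p (z, y)) := by
      intro y
      set t := margS p z * margT p y * Real.exp (h (z, y)) / (Z * p (z, y)) with htdef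
      have ht_pos : 0 < t :=
        div_pos (mul_pos (mul_pos (hmargS z) (hmargT y)) (Real.exp_pos _))
          (mul_pos (hZ z) (hp_pos _))
      have hA : (0:ℝ) < margS p z * margT p y :=
        mul_pos (hmargS z) (hmargT y)
      have hlog : Real.log t =
          Real.log (margS p z * margT p y) + h (z, y) - Real.log Z - Real.log (p (z, y)) := by
        rw [htdef, Real.log_div (mul_pos hA (Real.exp_pos _)).ne'
          (mul_pos (hZ z) (hp_pos _)).ne',
          Real.log_mul hA.ne' (Real.exp_pos _).ne',
          Real.log_mul hZne (hp_pos _).ne', Real.log_exp]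
        ring
      have h4 : Real.log (p (z, y) / (margS p z * margT p y)) =
          Real.log (p (z, y)) - Real.log (margS p z * margT p y) :=
        Real.log_div (hp_pos _).ne' hA.ne'
      have h2 : p (z, y) * Real.log t ≤ p (z, y) * (t - 1) :=
        mul_le_mul_of_nonneg_left (Real.log_le_sub_one_of_pos ht_pos) (hp_pos _).le
      have h3 : p (z, y) * t = margS p z * margT p y * Real.exp (h (z, y)) / Z := by
        rw [htdef]
        field_simp [hZne, (hp_pos (z, y)).ne']
      have h5 : p (z, y) * Real.log t =
          p (z, y) * h (z, y) - p (z, y) * Real.log Z -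
            p (z, y) * Real.log (p (z, y) / (margS p z * margT p y)) := by
        rw [hlog, h4]; ring
      linarith [h2, h3, h5]
    calc ∑ y, p (z, y) * h (z, y)
        ≤ ∑ y, (p (z, y) * Real.log (p (z, y) / (margS p z * margT p y)) +
            p (z, y) * Real.log Z +
            (margS p z * margT p y * Real.exp (h (z, y)) / Z - p (z, y))) :=
          Finset.sum_le_sum fun y _ => perY y
      _ = ∑ y, p (z, y) * Real.log (p (z, y) / (margS p z * margT p y)) +
            margS p z * Real.log Z := by
          rw [Finset.sum_add_distrib, Finset.sum_add_distrib]
          have e1 : ∑ y, p (z, y) * Real.log Z = margS p z * Real.log Z := by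
            rw [← Finset.sum_mul]; rfl
          have e2 : ∑ y, (margS p z * margT p y * Real.exp (h (z, y)) / Z - p (z, y)) = 0 := by
            rw [Finset.sum_sub_distrib]
            have e3 : ∑ y, margS p z * margT p y * Real.exp (h (z, y)) / Z =
                margS p z / Z * ∑ y, margT p y * Real.exp (h (z, y)) := by
              rw [Finset.mul_sum]
              exact Finset.sum_congr rfl fun y _ => by ring
            rw [e3]
            have : (∑ y, margT p y * Real.exp (h (z, y))) = Z := rfl
            rw [this, div_mul_cancel₀ _ hZne]
            simp [margS]
          rw [e1, e2]; ring
  linarith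
end

section
/- (NWJ bound, special case a(z) = e of the proof). For every critic h : S × T → ℝ, the mutual information satisfies I(p) ≥ Σ_{(z,y)} p(z,y)·h(z,y) − e^{−1}·Σ_z pS(z)·Z̃(z). -/
open Finset

variable {S T : Type*}

/-- NWJ bound, special case `a(z) = e`. -/
theorem nwj_bound [Fintype S] [Fintype T] [Nonempty S] [Nonempty T]
    (p : S × T → ℝ) (hp_pos : ∀ x, 0 < p x) (hp_sum : ∑ x, p x = 1)
    (h : S × T → ℝ) :
    mutInfo p ≥
      (∑ z, ∑ y, p (z, y) * h (z, y)) -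
        (Real.exp 1)⁻¹ * ∑ z, margS p z * partFun p h z := by
  have e_pos : (0:ℝ) < Real.exp 1 := Real.exp_pos 1
  have log_le : ∀ x : ℝ, 0 < x → Real.log x ≤ x / Real.exp 1 := by
    intro x hx
    have h1 : Real.log (x / Real.exp 1) ≤ x / Real.exp 1 - 1 :=
      Real.log_le_sub_one_of_pos (by positivity)
    have h2 : Real.log (x / Real.exp 1) = Real.log x - 1 := by
      rw [Real.log_div (ne_of_gt hx) (ne_of_gt e_pos), Real.log_exp]
    linarith
  have hS : ∀ z, 0 < margS p z := fun z =>
    Finset.sum_pos (fun y _ => hp_pos _) Finset.univ_nonempty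
  have hT : ∀ y, 0 < margT p y := fun y =>
    Finset.sum_pos (fun z _ => hp_pos _) Finset.univ_nonempty
  have key : ∀ z y,
      p (z, y) * h (z, y) -
        (Real.exp 1)⁻¹ * (margS p z * (margT p y * Real.exp (h (z, y)))) ≤
      p (z, y) * Real.log (p (z, y) / (margS p z * margT p y)) := by
    intro z y
    set a := p (z, y) with ha
    have hap : 0 < a := hp_pos _
    have hb : 0 < margS p z * margT p y := mul_pos (hS z) (hT y)
    set b := margS p z * margT p y with hbdef
    set c := Real.exp (h (z, y)) with hc
    have hcp : 0 < c := Real.exp_pos _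
    have hlog : Real.log (a / b) = h (z, y) - Real.log (b * c / a) := by
      rw [Real.log_div (ne_of_gt hap) (ne_of_gt hb),
        Real.log_div (ne_of_gt (mul_pos hb hcp)) (ne_of_gt hap),
        Real.log_mul (ne_of_gt hb) (ne_of_gt hcp), hc, Real.log_exp]
      ring
    have h1 : Real.log (b * c / a) ≤ (b * c / a) / Real.exp 1 :=
      log_le _ (by positivity)
    have h2 : a * Real.log (b * c / a) ≤ b * c / Real.exp 1 := by
      calc a * Real.log (b * c / a) ≤ a * ((b * c / a) / Real.exp 1) :=
            mul_le_mul_of_nonneg_left h1 hap.le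
        _ = b * c / Real.exp 1 := by field_simp
    have hrw : (Real.exp 1)⁻¹ * (margS p z * (margT p y * c)) = b * c / Real.exp 1 := by
      rw [hbdef]; field_simp
    rw [hlog, hrw]
    nlinarith [h2]
  have hsum : (∑ z, ∑ y, (p (z, y) * h (z, y) -
      (Real.exp 1)⁻¹ * (margS p z * (margT p y * Real.exp (h (z, y)))))) ≤ mutInfo p :=
    Finset.sum_le_sum (fun z _ => Finset.sum_le_sum fun y _ => key z y)
  have heq : (∑ z, ∑ y, (p (z, y) * h (z, y) -
      (Real.exp 1)⁻¹ * (margS p z * (margT p y * Real.exp (h (z, y)))))) =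
      (∑ z, ∑ y, p (z, y) * h (z, y)) -
        (Real.exp 1)⁻¹ * ∑ z, margS p z * partFun p h z := by
    have hB : (∑ z, ∑ y, (Real.exp 1)⁻¹ * (margS p z * (margT p y * Real.exp (h (z, y))))) =
        (Real.exp 1)⁻¹ * ∑ z, margS p z * partFun p h z := by
      rw [Finset.mul_sum]
      refine Finset.sum_congr rfl fun z _ => ?_
      rw [partFun, Finset.mul_sum, Finset.mul_sum]
    simp only [Finset.sum_sub_distrib]
    rw [hB]
  linarith [hsum, heq.symm.le]
end

section
/- (Multi-sample variational lower bound, Eq. (12) of the proof). Let K ≥ 1 and let a : S × (Fin K → T) → ℝ be strictly positive. Then I(p) ≥ 1 + Σ_{(z,y)} Σ_{ys : Fin (K−1) → T} p(z,y)·ΠpT(ys)·log( exp(h(z,y)) / a(z, (y, ys)) ) − Σ_z Σ_{ws : Fin K → T} pS(z)·ΠpT(ws)·( exp(h(z, ws_1)) / a(z, ws) ), where (y, ys) denotes the K-tuple obtained by prepending y to ys, and ws_1 denotes the first coordinate of ws. -/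
open Finset

variable {S T : Type*}

private lemma gibbs_aux (u w : ℝ) (hu : 0 < u) (hw : 0 < w) :
    u - w ≤ u * Real.log (u / w) := by
  have h1 : Real.log (w / u) ≤ w / u - 1 :=
    Real.log_le_sub_one_of_pos (by positivity)
  have h2 : Real.log (u / w) = - Real.log (w / u) := by
    rw [← Real.log_inv]; congr 1; field_simp
  have h3 : u * (w / u) = w := by field_simp
  rw [h2]
  nlinarith [mul_le_mul_of_nonneg_left h1 hu.le]

private lemma pointwise_aux (q s t P f : ℝ) (hq : 0 < q) (hs : 0 < s) (ht : 0 < t)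
    (hP : 0 < P) (hf : 0 < f) :
    q * P * Real.log f + q * P - s * (t * P) * f ≤ q * P * Real.log (q / (s * t)) := by
  have hg := gibbs_aux (q * P) (s * t * P * f) (by positivity) (by positivity)
  have heq : Real.log ((q * P) / (s * t * P * f)) = Real.log (q / (s * t)) - Real.log f := by
    rw [show (q * P) / (s * t * P * f) = (q / (s * t)) / f by field_simp,
      Real.log_div (by positivity) hf.ne']
  rw [heq] at hg
  nlinarith [hg]

/-- STATEMENT 9 (Multi-sample variational lower bound, Eq. (12)), with `K = n + 1 ≥ 1`. -/
theorem multisample_lower_bound [Fintype S] [Fintype T] [Nonempty S] [Nonempty T]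
    (p : S × T → ℝ) (hp_pos : ∀ x, 0 < p x) (hp_sum : ∑ x, p x = 1)
    (h : S × T → ℝ) (n : ℕ)
    (a : S × (Fin (n + 1) → T) → ℝ) (ha : ∀ x, 0 < a x) :
    mutInfo p ≥
      1 + (∑ z, ∑ y, ∑ ys : Fin n → T,
            p (z, y) * (∏ i, margT p (ys i)) *
              Real.log (Real.exp (h (z, y)) / a (z, Fin.cons y ys)))
        - ∑ z, ∑ ws : Fin (n + 1) → T,
            margS p z * (∏ i, margT p (ws i)) *
              (Real.exp (h (z, ws 0)) / a (z, ws)) := by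
  classical
  have hT : ∀ y, 0 < margT p y := fun y =>
    Finset.sum_pos (fun z _ => hp_pos _) Finset.univ_nonempty
  have hS : ∀ z, 0 < margS p z := fun z =>
    Finset.sum_pos (fun y _ => hp_pos _) Finset.univ_nonempty
  have hTsum : ∑ y, margT p y = 1 := by
    rw [← hp_sum, Fintype.sum_prod_type]
    unfold margT
    rw [Finset.sum_comm]
  have hPisum : ∀ m : ℕ, ∑ ys : Fin m → T, ∏ i, margT p (ys i) = 1 := by
    intro m
    calc ∑ ys : Fin m → T, ∏ i, margT p (ys i)
        = ∑ ys ∈ Fintype.piFinset (fun _ : Fin m => (Finset.univ : Finset T)),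
            ∏ i, margT p (ys i) := by rw [Fintype.piFinset_univ]
      _ = ∏ _i : Fin m, ∑ y, margT p y := (Finset.prod_univ_sum _ _).symm
      _ = 1 := by simp [hTsum]
  have hpull : ∀ (c : ℝ), ∑ ys : Fin n → T, c * ∏ i, margT p (ys i) = c := by
    intro c
    rw [← Finset.mul_sum, hPisum n, mul_one]
  have hMI : mutInfo p = ∑ z, ∑ y, ∑ ys : Fin n → T,
      p (z, y) * (∏ i, margT p (ys i)) *
        Real.log (p (z, y) / (margS p z * margT p y)) := by
    unfold mutInfo
    refine Finset.sum_congr rfl fun z _ => Finset.sum_congr rfl fun y _ => ?_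
    calc p (z, y) * Real.log (p (z, y) / (margS p z * margT p y))
        = ∑ ys : Fin n → T, (p (z, y) * Real.log (p (z, y) / (margS p z * margT p y))) *
            ∏ i, margT p (ys i) := by
          rw [← Finset.mul_sum, hPisum n, mul_one]
      _ = ∑ ys : Fin n → T, p (z, y) * (∏ i, margT p (ys i)) *
            Real.log (p (z, y) / (margS p z * margT p y)) :=
          Finset.sum_congr rfl fun ys _ => by ring
  have hone : ∑ z, ∑ y, ∑ ys : Fin n → T, p (z, y) * ∏ i, margT p (ys i) = 1 := by
    rw [← hp_sum, Fintype.sum_prod_type]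
    exact Finset.sum_congr rfl fun z _ => Finset.sum_congr rfl fun y _ => hpull _
  have hlast : (∑ z, ∑ ws : Fin (n + 1) → T,
        margS p z * (∏ i, margT p (ws i)) * (Real.exp (h (z, ws 0)) / a (z, ws)))
      = ∑ z, ∑ y, ∑ ys : Fin n → T,
        margS p z * (margT p y * ∏ i, margT p (ys i)) *
          (Real.exp (h (z, y)) / a (z, Fin.cons y ys)) := by
    refine Finset.sum_congr rfl fun z _ => ?_
    calc ∑ ws : Fin (n + 1) → T,
          margS p z * (∏ i, margT p (ws i)) * (Real.exp (h (z, ws 0)) / a (z, ws))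
        = ∑ pr : T × (Fin n → T),
            margS p z * (margT p pr.1 * ∏ i, margT p (pr.2 i)) *
              (Real.exp (h (z, pr.1)) / a (z, Fin.cons pr.1 pr.2)) := by
          refine (Fintype.sum_equiv (Fin.consEquiv fun _ => T)
            (fun pr => margS p z * (margT p pr.1 * ∏ i, margT p (pr.2 i)) *
              (Real.exp (h (z, pr.1)) / a (z, Fin.cons pr.1 pr.2)))
            (fun ws => margS p z * (∏ i, margT p (ws i)) *
              (Real.exp (h (z, ws 0)) / a (z, ws))) ?_).symm
          rintro ⟨y, ys⟩
          simp [Fin.consEquiv, Fin.prod_univ_succ]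
      _ = ∑ y, ∑ ys : Fin n → T,
            margS p z * (margT p y * ∏ i, margT p (ys i)) *
              (Real.exp (h (z, y)) / a (z, Fin.cons y ys)) := Fintype.sum_prod_type _
  have hsum : ∑ z, ∑ y, ∑ ys : Fin n → T,
      (p (z, y) * (∏ i, margT p (ys i)) *
          Real.log (Real.exp (h (z, y)) / a (z, Fin.cons y ys))
        + p (z, y) * ∏ i, margT p (ys i)
        - margS p z * (margT p y * ∏ i, margT p (ys i)) *
            (Real.exp (h (z, y)) / a (z, Fin.cons y ys)))
      ≤ ∑ z, ∑ y, ∑ ys : Fin n → T,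
        p (z, y) * (∏ i, margT p (ys i)) *
          Real.log (p (z, y) / (margS p z * margT p y)) := by
    refine Finset.sum_le_sum fun z _ => Finset.sum_le_sum fun y _ =>
      Finset.sum_le_sum fun ys _ => ?_
    exact pointwise_aux _ _ _ _ _ (hp_pos _) (hS z) (hT y)
      (Finset.prod_pos fun i _ => hT _) (div_pos (Real.exp_pos _) (ha _))
  have hsplit : ∑ z, ∑ y, ∑ ys : Fin n → T,
      (p (z, y) * (∏ i, margT p (ys i)) *
          Real.log (Real.exp (h (z, y)) / a (z, Fin.cons y ys))
        + p (z, y) * ∏ i, margT p (ys i)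
        - margS p z * (margT p y * ∏ i, margT p (ys i)) *
            (Real.exp (h (z, y)) / a (z, Fin.cons y ys)))
      = (∑ z, ∑ y, ∑ ys : Fin n → T,
          p (z, y) * (∏ i, margT p (ys i)) *
            Real.log (Real.exp (h (z, y)) / a (z, Fin.cons y ys)))
        + (∑ z, ∑ y, ∑ ys : Fin n → T, p (z, y) * ∏ i, margT p (ys i))
        - ∑ z, ∑ y, ∑ ys : Fin n → T,
            margS p z * (margT p y * ∏ i, margT p (ys i)) *
              (Real.exp (h (z, y)) / a (z, Fin.cons y ys)) := by
    simp [Finset.sum_add_distrib, Finset.sum_sub_distrib]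
  rw [ge_iff_le, hMI, hlast]
  rw [hsplit, hone] at hsum
  linarith
end

section
/- (Normalization of the Monte Carlo correction term, used in Eq. (13) of the proof). Let K ≥ 1 and define the Monte Carlo estimator m(z, ws) = (1/K)·Σ_{i=1}^{K} exp(h(z, ws_i)) for ws : Fin K → T. Then Σ_z Σ_{ws : Fin K → T} pS(z)·ΠpT(ws)·( exp(h(z, ws_1)) / m(z, ws) ) = 1, where ws_1 is the first coordinate of ws. -/
open Finset

variable {S T : Type*}

/-! For every tuple `ws` the weights `f (ws j) / ∑ i, f (ws i)` over `j : ι` sum to `1`, and the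
product measure `∏ i, q (ws i)` is invariant under permuting the coordinates of `ws`, so all `|ι|`
weights have the same expectation `(∑ q)^|ι| / |ι|`. For `q = pT` and `f = exp (h (z, ·))` this says
that `exp (h (z, ws 0)) / m(z, ws)` has expectation `1` for each `z`. -/

section Exchangeable

variable {ι α : Type*} [Fintype ι] [DecidableEq ι] [Fintype α]

theorem sum_pi_prod_eq_pow_card (q : α → ℝ) :
    ∑ ws : ι → α, ∏ i, q (ws i) = (∑ a, q a) ^ Fintype.card ι := by
  rw [← Fintype.prod_sum, prod_const, card_univ]

theorem sum_prod_mul_softmax_eq (q f : α → ℝ) (j k : ι) :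
    ∑ ws : ι → α, (∏ i, q (ws i)) * (f (ws j) / ∑ i, f (ws i)) =
      ∑ ws : ι → α, (∏ i, q (ws i)) * (f (ws k) / ∑ i, f (ws i)) := by
  refine Fintype.sum_equiv ((Equiv.swap j k).arrowCongr (Equiv.refl α)) _ _ fun ws => ?_
  have hswap : (Equiv.swap j k).arrowCongr (Equiv.refl α) ws = ws ∘ Equiv.swap j k := by
    funext i
    simp [Equiv.arrowCongr_apply, Equiv.symm_swap]
  rw [hswap]
  simp only [Function.comp_apply, Equiv.swap_apply_right,
    Equiv.prod_comp (Equiv.swap j k) fun i => q (ws i),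
    Equiv.sum_comp (Equiv.swap j k) fun i => f (ws i)]

theorem card_mul_sum_prod_mul_softmax [Nonempty ι] (q f : α → ℝ) (hf : ∀ a, 0 < f a) (j : ι) :
    Fintype.card ι * ∑ ws : ι → α, (∏ i, q (ws i)) * (f (ws j) / ∑ i, f (ws i)) =
      (∑ a, q a) ^ Fintype.card ι := by
  have hsoftmax (ws : ι → α) : ∑ k, f (ws k) / ∑ i, f (ws i) = 1 := by
    rw [← sum_div, div_self (sum_pos (fun i _ => hf (ws i)) univ_nonempty).ne']
  calc (Fintype.card ι : ℝ) * ∑ ws : ι → α, (∏ i, q (ws i)) * (f (ws j) / ∑ i, f (ws i))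
      = ∑ k, ∑ ws : ι → α, (∏ i, q (ws i)) * (f (ws k) / ∑ i, f (ws i)) := by
        simp only [sum_prod_mul_softmax_eq q f _ j, sum_const, card_univ, nsmul_eq_mul]
    _ = ∑ ws : ι → α, ∏ i, q (ws i) := by
        rw [sum_comm]
        simp only [← mul_sum, hsoftmax, mul_one]
    _ = (∑ a, q a) ^ Fintype.card ι := sum_pi_prod_eq_pow_card q

end Exchangeable

theorem sum_margS_eq_one [Fintype S] [Fintype T] {p : S × T → ℝ} (hp_sum : ∑ x, p x = 1) :
    ∑ z, margS p z = 1 := by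
  rw [← hp_sum, Fintype.sum_prod_type]
  rfl

theorem sum_margT_eq_one [Fintype S] [Fintype T] {p : S × T → ℝ} (hp_sum : ∑ x, p x = 1) :
    ∑ y, margT p y = 1 := by
  rw [← hp_sum, Fintype.sum_prod_type, sum_comm]
  rfl

theorem mc_correction_normalized_general [Fintype S] [Fintype T]
    (p : S × T → ℝ) (hp_sum : ∑ x, p x = 1)
    (h : S × T → ℝ) (n : ℕ) :
    ∑ z, ∑ ws : Fin (n + 1) → T,
        margS p z * (∏ i, margT p (ws i)) *
          (Real.exp (h (z, ws 0)) / ((∑ i, Real.exp (h (z, ws i))) / (n + 1))) = 1 := by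
  have hz (z : S) : ∑ ws : Fin (n + 1) → T,
      margS p z * (∏ i, margT p (ws i)) *
        (Real.exp (h (z, ws 0)) / ((∑ i, Real.exp (h (z, ws i))) / (n + 1))) = margS p z := by
    have hnormal := card_mul_sum_prod_mul_softmax (margT p) (fun y => Real.exp (h (z, y)))
      (fun _ => Real.exp_pos _) (0 : Fin (n + 1))
    rw [sum_margT_eq_one hp_sum, one_pow, Fintype.card_fin, Nat.cast_succ] at hnormal
    calc _ = margS p z * (((n : ℝ) + 1) * ∑ ws : Fin (n + 1) → T, (∏ i, margT p (ws i)) *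
          (Real.exp (h (z, ws 0)) / ∑ i, Real.exp (h (z, ws i)))) := by
          simp only [mul_sum, div_div_eq_mul_div]
          exact sum_congr rfl fun _ _ => by ring
      _ = margS p z := by rw [hnormal, mul_one]
  rw [sum_congr rfl fun z _ => hz z, sum_margS_eq_one hp_sum]

/-- STATEMENT 10 (Normalization of the Monte Carlo correction term), with `K = n + 1 ≥ 1`. -/
theorem mc_correction_normalized [Fintype S] [Fintype T] [Nonempty S] [Nonempty T]
    (p : S × T → ℝ) (hp_pos : ∀ x, 0 < p x) (hp_sum : ∑ x, p x = 1)
    (h : S × T → ℝ) (n : ℕ) :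
    ∑ z, ∑ ws : Fin (n + 1) → T,
        margS p z * (∏ i, margT p (ws i)) *
          (Real.exp (h (z, ws 0)) / ((∑ i, Real.exp (h (z, ws i))) / (n + 1))) = 1 :=
  mc_correction_normalized_general p hp_sum h n
end

section
/- (InfoNCE is a valid mutual-information lower bound, Eq. (4)/(13) of the proof). Let K ≥ 1 and define I_NCE(K) = Σ_{(z,y)} Σ_{ys : Fin (K−1) → T} p(z,y)·ΠpT(ys)·log( exp(h(z,y)) / m(z; y, ys) ). Then I(p) ≥ I_NCE(K). -/
open Finset

variable {S T : Type*}

/-- Auxiliary: sum over all tuples of products of a pmf equals 1. -/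
lemma aux_sum_prod_one [Fintype T] {q : T → ℝ} (hq : ∑ y, q y = 1) (m : ℕ) :
    ∑ g : Fin m → T, ∏ i, q (g i) = 1 := by
  rw [← Fintype.sum_pow, hq, one_pow]

/-- Auxiliary: swapping the distinguished coordinate doesn't change the sum. -/
lemma aux_swap_sum [Fintype T] (q F : T → ℝ) {K : ℕ} (j j' : Fin K) :
    ∑ g : Fin K → T, (∏ i, q (g i)) * (F (g j) / ∑ k, F (g k))
      = ∑ g : Fin K → T, (∏ i, q (g i)) * (F (g j') / ∑ k, F (g k)) := by
  classical
  refine Fintype.sum_equiv (Equiv.arrowCongr (Equiv.swap j j') (Equiv.refl T))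
    _ _ (fun g => ?_)
  have he : ∀ i, (Equiv.arrowCongr (Equiv.swap j j') (Equiv.refl T) g) i
      = g (Equiv.swap j j' i) := by
    intro i
    simp [Equiv.arrowCongr, Equiv.swap_apply_def]
  simp only [he, Equiv.swap_apply_right]
  rw [Equiv.prod_comp (Equiv.swap j j') (fun i => q (g i)),
    Equiv.sum_comp (Equiv.swap j j') (fun k => F (g k))]

/-- Auxiliary key identity: expected softmax weight of one fixed coordinate is `1/K`. -/
lemma aux_key_sum [Fintype T] [Nonempty T] {K : ℕ} (q F : T → ℝ) (hF : ∀ y, 0 < F y)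
    (hq : ∑ y, q y = 1) (j0 : Fin K) :
    ∑ g : Fin K → T, (∏ i, q (g i)) * (F (g j0) / ∑ k, F (g k)) = 1 / K := by
  classical
  have hKpos : 0 < K := j0.pos
  have hNe : Nonempty (Fin K) := ⟨j0⟩
  have hsum : ∑ j : Fin K, ∑ g : Fin K → T,
      (∏ i, q (g i)) * (F (g j) / ∑ k, F (g k)) = 1 := by
    rw [Finset.sum_comm]
    have hg : ∀ g : Fin K → T,
        ∑ j : Fin K, (∏ i, q (g i)) * (F (g j) / ∑ k, F (g k)) = ∏ i, q (g i) := by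
      intro g
      have hne : (∑ k, F (g k)) ≠ 0 :=
        ne_of_gt (Finset.sum_pos (fun k _ => hF _) Finset.univ_nonempty)
      rw [← Finset.mul_sum, ← Finset.sum_div, div_self hne, mul_one]
    rw [Finset.sum_congr rfl (fun g _ => hg g)]
    exact aux_sum_prod_one hq K
  have hconst : ∀ j : Fin K, (∑ g : Fin K → T,
      (∏ i, q (g i)) * (F (g j) / ∑ k, F (g k)))
      = ∑ g : Fin K → T, (∏ i, q (g i)) * (F (g j0) / ∑ k, F (g k)) :=
    fun j => aux_swap_sum q F j j0
  rw [Finset.sum_congr rfl (fun j _ => hconst j), Finset.sum_const,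
    Finset.card_univ, Fintype.card_fin, nsmul_eq_mul] at hsum
  have hK0 : (K : ℝ) ≠ 0 := Nat.cast_ne_zero.mpr hKpos.ne'
  field_simp at hsum ⊢
  linarith

/-- STATEMENT 11 (InfoNCE is a valid mutual-information lower bound), with `K = n + 1 ≥ 1`. -/
theorem infonce_lower_bound [Fintype S] [Fintype T] [Nonempty S] [Nonempty T]
    (p : S × T → ℝ) (hp_pos : ∀ x, 0 < p x) (hp_sum : ∑ x, p x = 1)
    (h : S × T → ℝ) (n : ℕ) :
    mutInfo p ≥ INCE p h n := by
  classical
  set q := margT p with hqdef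
  have hq_pos : ∀ y, 0 < q y := fun y => Finset.sum_pos (fun z _ => hp_pos _) Finset.univ_nonempty
  have hS_pos : ∀ z, 0 < margS p z := fun z => Finset.sum_pos (fun y _ => hp_pos _) Finset.univ_nonempty
  have hp_sum' : ∑ z, ∑ y, p (z, y) = 1 := by
    rw [← hp_sum]; exact (Fintype.sum_prod_type p).symm
  have hq1 : ∑ y, q y = 1 := by
    rw [hqdef]; unfold margT; rw [Finset.sum_comm]; exact hp_sum'
  have hS1 : ∑ z, margS p z = 1 := hp_sum'
  have hm_pos : ∀ z y (ys : Fin n → T), 0 < mEst h n z y ys := by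
    intro z y ys
    unfold mEst
    have : (0:ℝ) < Real.exp (h (z, y)) + ∑ i, Real.exp (h (z, ys i)) := by positivity
    positivity
  -- the key expectation identity
  have hkey : ∀ z : S, ∑ y, ∑ ys : Fin n → T,
      q y * (∏ i, q (ys i)) * (Real.exp (h (z, y)) / mEst h n z y ys) = 1 := by
    intro z
    set F : T → ℝ := fun t => Real.exp (h (z, t)) with hFdef
    have hF : ∀ t, 0 < F t := fun t => Real.exp_pos _
    have hstep : ∀ (y : T) (ys : Fin n → T),
        q y * (∏ i, q (ys i)) * (Real.exp (h (z, y)) / mEst h n z y ys)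
        = (n + 1 : ℝ) * ((∏ i : Fin (n+1), q ((Fin.cons y ys : Fin (n+1) → T) i)) *
            (F ((Fin.cons y ys : Fin (n+1) → T) 0) / ∑ k : Fin (n+1), F ((Fin.cons y ys : Fin (n+1) → T) k))) := by
      intro y ys
      have hprod : (∏ i : Fin (n+1), q ((Fin.cons y ys : Fin (n+1) → T) i)) = q y * ∏ i : Fin n, q (ys i) := by
        rw [Fin.prod_univ_succ]; simp
      have hsum : (∑ k : Fin (n+1), F ((Fin.cons y ys : Fin (n+1) → T) k)) = F y + ∑ i : Fin n, F (ys i) := by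
        rw [Fin.sum_univ_succ]; simp
      have hden : (0:ℝ) < F y + ∑ i : Fin n, F (ys i) := by positivity
      have hn1 : (0:ℝ) < (n:ℝ) + 1 := by positivity
      rw [hprod, hsum, Fin.cons_zero]
      unfold mEst
      rw [hFdef]
      field_simp
    rw [Finset.sum_congr rfl (fun y _ => Finset.sum_congr rfl (fun ys _ => hstep y ys))]
    have hpair : ∑ y, ∑ ys : Fin n → T,
        (n + 1 : ℝ) * ((∏ i : Fin (n+1), q ((Fin.cons y ys : Fin (n+1) → T) i)) *
          (F ((Fin.cons y ys : Fin (n+1) → T) 0) / ∑ k : Fin (n+1), F ((Fin.cons y ys : Fin (n+1) → T) k)))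
        = ∑ g : Fin (n+1) → T,
          (n + 1 : ℝ) * ((∏ i, q (g i)) * (F (g 0) / ∑ k, F (g k))) := by
      calc ∑ y, ∑ ys : Fin n → T,
            (n + 1 : ℝ) * ((∏ i : Fin (n+1), q ((Fin.cons y ys : Fin (n+1) → T) i)) *
              (F ((Fin.cons y ys : Fin (n+1) → T) 0) /
                ∑ k : Fin (n+1), F ((Fin.cons y ys : Fin (n+1) → T) k)))
          = ∑ pr : T × (Fin n → T),
            (n + 1 : ℝ) * ((∏ i : Fin (n+1), q ((Fin.cons pr.1 pr.2 : Fin (n+1) → T) i)) *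
              (F ((Fin.cons pr.1 pr.2 : Fin (n+1) → T) 0) /
                ∑ k : Fin (n+1), F ((Fin.cons pr.1 pr.2 : Fin (n+1) → T) k))) := by
            exact (Fintype.sum_prod_type' _).symm
        _ = ∑ g : Fin (n+1) → T,
            (n + 1 : ℝ) * ((∏ i, q (g i)) * (F (g 0) / ∑ k, F (g k))) :=
            Fintype.sum_equiv (Fin.consEquiv fun _ => T) _ _ (fun pr => rfl)
    rw [hpair, ← Finset.mul_sum, aux_key_sum q F hF hq1 (0 : Fin (n+1))]
    push_cast
    field_simp
  -- rewrite mutInfo as a triple sum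
  have hM : mutInfo p = ∑ z, ∑ y, ∑ ys : Fin n → T,
      p (z, y) * (∏ i, q (ys i)) * Real.log (p (z, y) / (margS p z * q y)) := by
    unfold mutInfo
    refine Finset.sum_congr rfl fun z _ => Finset.sum_congr rfl fun y _ => ?_
    calc p (z, y) * Real.log (p (z, y) / (margS p z * margT p y))
        = (p (z, y) * Real.log (p (z, y) / (margS p z * q y))) *
            ∑ ys : Fin n → T, ∏ i, q (ys i) := by
          rw [aux_sum_prod_one hq1 n, mul_one]
      _ = _ := by
          rw [Finset.mul_sum]
          exact Finset.sum_congr rfl fun ys _ => by ring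
  rw [ge_iff_le, hM]
  -- pointwise bound
  have hpt : ∀ (z : S) (y : T) (ys : Fin n → T),
      p (z, y) * (∏ i, margT p (ys i)) *
          Real.log (Real.exp (h (z, y)) / mEst h n z y ys)
        ≤ p (z, y) * (∏ i, q (ys i)) * Real.log (p (z, y) / (margS p z * q y))
          - p (z, y) * (∏ i, q (ys i))
          + margS p z * (q y * (∏ i, q (ys i)) *
              (Real.exp (h (z, y)) / mEst h n z y ys)) := by
    intro z y ys
    set A : ℝ := p (z, y) / (margS p z * q y) with hA
    set B : ℝ := Real.exp (h (z, y)) / mEst h n z y ys with hB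
    have hApos : 0 < A := div_pos (hp_pos _) (mul_pos (hS_pos z) (hq_pos y))
    have hBpos : 0 < B := div_pos (Real.exp_pos _) (hm_pos z y ys)
    have hw : 0 < p (z, y) * ∏ i, q (ys i) :=
      mul_pos (hp_pos _) (Finset.prod_pos fun i _ => hq_pos _)
    have hlog : Real.log B - Real.log A ≤ B / A - 1 := by
      have := Real.log_le_sub_one_of_pos (div_pos hBpos hApos)
      rwa [Real.log_div (ne_of_gt hBpos) (ne_of_gt hApos)] at this
    have hmul := mul_le_mul_of_nonneg_left hlog (le_of_lt hw)
    have hBA : (p (z, y) * ∏ i, q (ys i)) * (B / A)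
        = margS p z * (q y * (∏ i, q (ys i)) * B) := by
      rw [hA]
      have hp0 : p (z, y) ≠ 0 := ne_of_gt (hp_pos _)
      have hS0 : margS p z ≠ 0 := ne_of_gt (hS_pos z)
      have hq0 : q y ≠ 0 := ne_of_gt (hq_pos y)
      field_simp
    nlinarith [hmul, hBA]
  calc INCE p h n
      ≤ ∑ z, ∑ y, ∑ ys : Fin n → T,
          (p (z, y) * (∏ i, q (ys i)) * Real.log (p (z, y) / (margS p z * q y))
            - p (z, y) * (∏ i, q (ys i))
            + margS p z * (q y * (∏ i, q (ys i)) *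
                (Real.exp (h (z, y)) / mEst h n z y ys))) := by
        unfold INCE
        refine Finset.sum_le_sum fun z _ => Finset.sum_le_sum fun y _ =>
          Finset.sum_le_sum fun ys _ => hpt z y ys
    _ = (∑ z, ∑ y, ∑ ys : Fin n → T,
          p (z, y) * (∏ i, q (ys i)) * Real.log (p (z, y) / (margS p z * q y)))
        - (∑ z, ∑ y, ∑ ys : Fin n → T, p (z, y) * (∏ i, q (ys i)))
        + (∑ z, ∑ y, ∑ ys : Fin n → T, margS p z * (q y * (∏ i, q (ys i)) *
            (Real.exp (h (z, y)) / mEst h n z y ys))) := by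
        simp [Finset.sum_add_distrib, Finset.sum_sub_distrib]
    _ = _ := by
        have h1 : (∑ z, ∑ y, ∑ ys : Fin n → T, p (z, y) * (∏ i, q (ys i))) = 1 := by
          calc (∑ z, ∑ y, ∑ ys : Fin n → T, p (z, y) * (∏ i, q (ys i)))
              = ∑ z, ∑ y, p (z, y) := by
                refine Finset.sum_congr rfl fun z _ => Finset.sum_congr rfl fun y _ => ?_
                rw [← Finset.mul_sum, aux_sum_prod_one hq1 n, mul_one]
            _ = 1 := hp_sum'
        have h2 : (∑ z, ∑ y, ∑ ys : Fin n → T, margS p z * (q y * (∏ i, q (ys i)) *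
            (Real.exp (h (z, y)) / mEst h n z y ys))) = 1 := by
          calc (∑ z, ∑ y, ∑ ys : Fin n → T, margS p z * (q y * (∏ i, q (ys i)) *
                (Real.exp (h (z, y)) / mEst h n z y ys)))
              = ∑ z, margS p z * (∑ y, ∑ ys : Fin n → T, q y * (∏ i, q (ys i)) *
                (Real.exp (h (z, y)) / mEst h n z y ys)) := by
                refine Finset.sum_congr rfl fun z _ => ?_
                rw [Finset.mul_sum]
                exact Finset.sum_congr rfl fun y _ => by rw [Finset.mul_sum]
            _ = ∑ z, margS p z := by
                refine Finset.sum_congr rfl fun z _ => ?_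
                rw [hkey z, mul_one]
            _ = 1 := hS1
        rw [h1, h2]
        ring
end

section
/- (Asymptotic tightness: the InfoNCE bound recovers the decoder bound as the number of negative samples grows, final claim of the proof of Proposition 1). For every critic h : S × T → ℝ, the sequence K ↦ I_NCE(K) converges, as K → ∞, to I_DLB = Σ_{(z,y)} p(z,y)·h(z,y) − Σ_z pS(z)·log Z̃(z); equivalently, Σ_{(z,y)} Σ_{ys : Fin (K−1) → T} p(z,y)·ΠpT(ys)·log( m(z; y, ys) ) → Σ_z pS(z)·log Z̃(z) as K → ∞. -/
open Finset

variable {S T : Type*}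

section helpers

variable {T : Type*} [Fintype T]

lemma sumProd (n : ℕ) (f : Fin n → T → ℝ) :
    ∑ ys : Fin n → T, ∏ i, f i (ys i) = ∏ i, ∑ y, f i y :=
  (Fintype.prod_sum f).symm

lemma markOne (w u : T → ℝ) (hw1 : ∑ y, w y = 1) (n : ℕ) (k : Fin n) :
    ∑ ys : Fin n → T, (∏ i, w (ys i)) * u (ys k) = ∑ y, w y * u y := by
  have e1 : ∀ ys : Fin n → T, (∏ i, w (ys i)) * u (ys k)
      = ∏ i, (w (ys i) * (if k = i then u (ys i) else 1)) := by
    intro ys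
    rw [Finset.prod_mul_distrib, Finset.prod_ite_eq]
    simp
  have e2 := sumProd n (fun i y => w y * (if k = i then u y else 1))
  calc ∑ ys : Fin n → T, (∏ i, w (ys i)) * u (ys k)
      = ∑ ys : Fin n → T, ∏ i, (w (ys i) * (if k = i then u (ys i) else 1)) := by
        simp_rw [e1]
    _ = ∏ i, ∑ y, w y * (if k = i then u y else 1) := e2
    _ = ∏ i, (if k = i then (∑ y, w y * u y) else 1) := by
        apply Finset.prod_congr rfl
        intro i _
        by_cases hik : k = i <;> simp [hik, hw1]
    _ = ∑ y, w y * u y := by rw [Finset.prod_ite_eq]; simp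

lemma markTwo (w g : T → ℝ) (hw1 : ∑ y, w y = 1) (n : ℕ) (i k : Fin n) (hik : i ≠ k) :
    ∑ ys : Fin n → T, (∏ j, w (ys j)) * (g (ys i) * g (ys k))
      = (∑ y, w y * g y) * (∑ y, w y * g y) := by
  have e1 : ∀ ys : Fin n → T, (∏ j, w (ys j)) * (g (ys i) * g (ys k))
      = ∏ j, (w (ys j) * (if i = j then g (ys j) else 1) * (if k = j then g (ys j) else 1)) := by
    intro ys
    rw [Finset.prod_mul_distrib, Finset.prod_mul_distrib, Finset.prod_ite_eq,
      Finset.prod_ite_eq]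
    simp [mul_assoc]
  have e2 := sumProd n (fun j y => w y * (if i = j then g y else 1) * (if k = j then g y else 1))
  calc ∑ ys : Fin n → T, (∏ j, w (ys j)) * (g (ys i) * g (ys k))
      = ∑ ys : Fin n → T,
          ∏ j, (w (ys j) * (if i = j then g (ys j) else 1) * (if k = j then g (ys j) else 1)) := by
        simp_rw [e1]
    _ = ∏ j, ∑ y, w y * (if i = j then g y else 1) * (if k = j then g y else 1) := e2
    _ = ∏ j, ((if i = j then (∑ y, w y * g y) else 1) * (if k = j then (∑ y, w y * g y) else 1)) := by
        apply Finset.prod_congr rfl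
        intro j _
        by_cases h1 : i = j <;> by_cases h2 : k = j
        · exact absurd (h1.trans h2.symm) hik
        · simp [h1, h2]
        · simp [h1, h2]
        · simp [h1, h2, hw1]
    _ = (∑ y, w y * g y) * (∑ y, w y * g y) := by
        rw [Finset.prod_mul_distrib, Finset.prod_ite_eq, Finset.prod_ite_eq]
        simp

lemma moment0 (w : T → ℝ) (hw1 : ∑ y, w y = 1) (n : ℕ) :
    ∑ ys : Fin n → T, (∏ i, w (ys i)) = 1 := by
  have e2 := sumProd n (fun _ y => w y)
  rw [e2]
  simp [hw1]

lemma moment1 (w g : T → ℝ) (hw1 : ∑ y, w y = 1) (n : ℕ) :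
    ∑ ys : Fin n → T, (∏ i, w (ys i)) * (∑ i, g (ys i)) = n * (∑ y, w y * g y) := by
  simp_rw [Finset.mul_sum]
  rw [Finset.sum_comm]
  simp_rw [markOne w g hw1 n]
  rw [Finset.sum_const, Finset.card_univ, Fintype.card_fin, nsmul_eq_mul, Finset.mul_sum]

lemma moment2 (w g : T → ℝ) (hw1 : ∑ y, w y = 1) (n : ℕ) :
    ∑ ys : Fin n → T, (∏ j, w (ys j)) * (∑ i, g (ys i)) ^ 2
      = n * (∑ y, w y * (g y * g y)) + ((n : ℝ) ^ 2 - n) * ((∑ y, w y * g y)) ^ 2 := by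
  set Z := ∑ y, w y * g y with hZ
  set Q := ∑ y, w y * (g y * g y) with hQ
  have e1 : ∀ ys : Fin n → T, (∏ j, w (ys j)) * (∑ i, g (ys i)) ^ 2
      = ∑ i, ∑ k, (∏ j, w (ys j)) * (g (ys i) * g (ys k)) := by
    intro ys
    rw [sq, Finset.sum_mul_sum]
    rw [Finset.mul_sum]
    apply Finset.sum_congr rfl
    intro i _
    rw [Finset.mul_sum]
  simp_rw [e1]
  rw [Finset.sum_comm]
  have e3 : ∀ i : Fin n, ∑ ys : Fin n → T, ∑ k, (∏ j, w (ys j)) * (g (ys i) * g (ys k))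
      = Q + ((n : ℝ) - 1) * Z ^ 2 := by
    intro i
    rw [Finset.sum_comm]
    have e4 : ∀ k : Fin n, ∑ ys : Fin n → T, (∏ j, w (ys j)) * (g (ys i) * g (ys k))
        = if i = k then Q else Z ^ 2 := by
      intro k
      by_cases hik : i = k
      · subst hik
        simp only [if_pos rfl]
        exact markOne w (fun y => g y * g y) hw1 n i
      · rw [if_neg hik, sq]
        exact markTwo w g hw1 n i k hik
    simp_rw [e4]
    have : ∀ k : Fin n, (if i = k then Q else Z ^ 2) = Z ^ 2 + (if i = k then Q - Z ^ 2 else 0) := by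
      intro k; by_cases hik : i = k <;> simp [hik]
    simp_rw [this]
    rw [Finset.sum_add_distrib, Finset.sum_ite_eq, Finset.sum_const, Finset.card_univ]
    simp
    ring
  simp_rw [e3]
  rw [Finset.sum_const, Finset.card_univ]
  simp [Fintype.card_fin]
  ring

lemma sqDev (w g : T → ℝ) (hw1 : ∑ y, w y = 1) (a : ℝ) (n : ℕ) :
    ∑ ys : Fin n → T, (∏ i, w (ys i)) * ((a + ∑ i, g (ys i)) / (n + 1)
        - (∑ y, w y * g y)) ^ 2
      = ((n : ℝ) * ((∑ y, w y * (g y * g y)) - (∑ y, w y * g y) ^ 2)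
          + (a - (∑ y, w y * g y)) ^ 2) / ((n : ℝ) + 1) ^ 2 := by
  set Z := ∑ y, w y * g y with hZ
  set Q := ∑ y, w y * (g y * g y) with hQ
  have hn : ((n : ℝ) + 1) ≠ 0 := by positivity
  have e : ∀ ys : Fin n → T, (∏ i, w (ys i)) * ((a + ∑ i, g (ys i)) / (n + 1) - Z) ^ 2
      = ((∏ i, w (ys i)) * (∑ i, g (ys i)) ^ 2) / ((n : ℝ) + 1) ^ 2
        + (2 * (a - ((n : ℝ) + 1) * Z) / ((n : ℝ) + 1) ^ 2) * ((∏ i, w (ys i)) * (∑ i, g (ys i)))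
        + ((a - ((n : ℝ) + 1) * Z) ^ 2 / ((n : ℝ) + 1) ^ 2) * (∏ i, w (ys i)) := by
    intro ys
    field_simp
    ring
  simp_rw [e]
  rw [Finset.sum_add_distrib, Finset.sum_add_distrib, ← Finset.sum_div, ← Finset.mul_sum,
    ← Finset.mul_sum, moment2 w g hw1 n, moment1 w g hw1 n, moment0 w hw1 n]
  rw [← hZ, ← hQ]
  field_simp
  ring

lemma logLip {ε x c : ℝ} (hε : 0 < ε) (hx : ε ≤ x) (hc : ε ≤ c) :
    |Real.log x - Real.log c| ≤ |x - c| / ε := by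
  have hx0 : 0 < x := lt_of_lt_of_le hε hx
  have hc0 : 0 < c := lt_of_lt_of_le hε hc
  rw [abs_sub_le_iff]
  constructor
  · have h1 : Real.log (x / c) ≤ x / c - 1 := Real.log_le_sub_one_of_pos (div_pos hx0 hc0)
    rw [Real.log_div hx0.ne' hc0.ne'] at h1
    have h2 : x / c - 1 = (x - c) / c := by field_simp
    calc Real.log x - Real.log c ≤ (x - c) / c := by rw [← h2]; exact h1
      _ ≤ |x - c| / ε := div_le_div₀ (abs_nonneg _) (le_abs_self _) hε hc
  · have h1 : Real.log (c / x) ≤ c / x - 1 := Real.log_le_sub_one_of_pos (div_pos hc0 hx0)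
    rw [Real.log_div hc0.ne' hx0.ne'] at h1
    have h2 : c / x - 1 = (c - x) / x := by field_simp
    calc Real.log c - Real.log x ≤ (c - x) / x := by rw [← h2]; exact h1
      _ ≤ |x - c| / ε := by
          rw [abs_sub_comm]
          exact div_le_div₀ (abs_nonneg _) (le_abs_self _) hε hx

lemma key (w g : T → ℝ) (hw : ∀ y, 0 ≤ w y) (hw1 : ∑ y, w y = 1)
    (Eb : ℝ) (hEb : 1 ≤ Eb) (hg1 : ∀ y, Eb⁻¹ ≤ g y) (hg2 : ∀ y, g y ≤ Eb)
    (a : ℝ) (ha1 : Eb⁻¹ ≤ a) (ha2 : a ≤ Eb) (n : ℕ) :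
    |(∑ ys : Fin n → T, (∏ i, w (ys i)) * Real.log ((a + ∑ i, g (ys i)) / (n + 1)))
      - Real.log (∑ y, w y * g y)| ≤ Eb * Real.sqrt (Eb ^ 2 / ((n : ℝ) + 1)) := by
  set Z := ∑ y, w y * g y with hZdef
  have hEb0 : (0:ℝ) < Eb := lt_of_lt_of_le one_pos hEb
  have hε : (0:ℝ) < Eb⁻¹ := inv_pos.2 hEb0
  have hg0 : ∀ y, 0 ≤ g y := fun y => le_trans hε.le (hg1 y)
  have hZ1 : Eb⁻¹ ≤ Z := by
    calc Eb⁻¹ = ∑ y, w y * Eb⁻¹ := by rw [← Finset.sum_mul, hw1, one_mul]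
      _ ≤ Z := Finset.sum_le_sum fun y _ => mul_le_mul_of_nonneg_left (hg1 y) (hw y)
  have hZ2 : Z ≤ Eb := by
    calc Z ≤ ∑ y, w y * Eb := Finset.sum_le_sum fun y _ => mul_le_mul_of_nonneg_left (hg2 y) (hw y)
      _ = Eb := by rw [← Finset.sum_mul, hw1, one_mul]
  have hQ : (∑ y, w y * (g y * g y)) ≤ Eb ^ 2 := by
    calc (∑ y, w y * (g y * g y)) ≤ ∑ y, w y * Eb ^ 2 :=
          Finset.sum_le_sum fun y _ => mul_le_mul_of_nonneg_left
            (by rw [sq]; exact mul_le_mul (hg2 y) (hg2 y) (hg0 y) hEb0.le) (hw y)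
      _ = Eb ^ 2 := by rw [← Finset.sum_mul, hw1, one_mul]
  have hW : ∀ ys : Fin n → T, 0 ≤ ∏ i, w (ys i) :=
    fun ys => Finset.prod_nonneg fun i _ => hw (ys i)
  have hn1 : (0:ℝ) < (n : ℝ) + 1 := by positivity
  have hm : ∀ ys : Fin n → T, Eb⁻¹ ≤ (a + ∑ i, g (ys i)) / ((n : ℝ) + 1) := by
    intro ys
    rw [le_div_iff₀ hn1]
    have h1 : (n : ℝ) * Eb⁻¹ ≤ ∑ i, g (ys i) := by
      calc (n : ℝ) * Eb⁻¹ = ∑ _i : Fin n, Eb⁻¹ := by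
            rw [Finset.sum_const, Finset.card_univ, Fintype.card_fin, nsmul_eq_mul]
        _ ≤ ∑ i, g (ys i) := Finset.sum_le_sum fun i _ => hg1 (ys i)
    nlinarith
  -- rewrite as a single weighted sum of differences
  have hsplit : (∑ ys : Fin n → T, (∏ i, w (ys i)) * Real.log ((a + ∑ i, g (ys i)) / (n + 1)))
      - Real.log Z
      = ∑ ys : Fin n → T, (∏ i, w (ys i))
          * (Real.log ((a + ∑ i, g (ys i)) / (n + 1)) - Real.log Z) := by
    simp_rw [mul_sub]
    rw [Finset.sum_sub_distrib, ← Finset.sum_mul, moment0 w hw1 n, one_mul]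
  rw [hsplit]
  -- Cauchy-Schwarz
  have hCS : (∑ ys : Fin n → T, (∏ i, w (ys i)) * |(a + ∑ i, g (ys i)) / ((n : ℝ) + 1) - Z|) ^ 2
      ≤ ∑ ys : Fin n → T, (∏ i, w (ys i)) * ((a + ∑ i, g (ys i)) / ((n : ℝ) + 1) - Z) ^ 2 := by
    have h := Finset.sum_mul_sq_le_sq_mul_sq Finset.univ
      (fun ys : Fin n → T => Real.sqrt (∏ i, w (ys i)))
      (fun ys : Fin n → T => Real.sqrt (∏ i, w (ys i))
        * |(a + ∑ i, g (ys i)) / ((n : ℝ) + 1) - Z|)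
    have e1 : ∀ ys : Fin n → T, Real.sqrt (∏ i, w (ys i)) * (Real.sqrt (∏ i, w (ys i))
        * |(a + ∑ i, g (ys i)) / ((n : ℝ) + 1) - Z|)
        = (∏ i, w (ys i)) * |(a + ∑ i, g (ys i)) / ((n : ℝ) + 1) - Z| := by
      intro ys
      rw [← mul_assoc, Real.mul_self_sqrt (hW ys)]
    have e2 : ∀ ys : Fin n → T, Real.sqrt (∏ i, w (ys i)) ^ 2 = ∏ i, w (ys i) :=
      fun ys => Real.sq_sqrt (hW ys)
    have e3 : ∀ ys : Fin n → T, (Real.sqrt (∏ i, w (ys i))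
        * |(a + ∑ i, g (ys i)) / ((n : ℝ) + 1) - Z|) ^ 2
        = (∏ i, w (ys i)) * ((a + ∑ i, g (ys i)) / ((n : ℝ) + 1) - Z) ^ 2 := by
      intro ys
      rw [mul_pow, Real.sq_sqrt (hW ys), sq_abs]
    simp_rw [e1, e2, e3] at h
    rwa [moment0 w hw1 n, one_mul] at h
  have hvar : (∑ ys : Fin n → T, (∏ i, w (ys i))
      * ((a + ∑ i, g (ys i)) / ((n : ℝ) + 1) - Z) ^ 2) ≤ Eb ^ 2 / ((n : ℝ) + 1) := by
    rw [sqDev w g hw1 a n]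
    rw [div_le_div_iff₀ (by positivity) hn1]
    have hN : (0:ℝ) ≤ (n : ℝ) := Nat.cast_nonneg n
    have haZ : (a - Z) ^ 2 ≤ Eb ^ 2 := by nlinarith
    have t1 : 0 ≤ (Eb ^ 2 - (∑ y, w y * (g y * g y))) * ((n : ℝ) * ((n : ℝ) + 1)) :=
      mul_nonneg (sub_nonneg.2 hQ) (mul_nonneg hN hn1.le)
    have t2 : 0 ≤ (Eb ^ 2 - (a - Z) ^ 2) * ((n : ℝ) + 1) :=
      mul_nonneg (sub_nonneg.2 haZ) hn1.le
    have t3 : 0 ≤ Z ^ 2 * ((n : ℝ) * ((n : ℝ) + 1)) :=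
      mul_nonneg (sq_nonneg _) (mul_nonneg hN hn1.le)
    nlinarith [t1, t2, t3]
  have habs : (∑ ys : Fin n → T, (∏ i, w (ys i)) * |(a + ∑ i, g (ys i)) / ((n : ℝ) + 1) - Z|)
      ≤ Real.sqrt (Eb ^ 2 / ((n : ℝ) + 1)) := by
    apply Real.le_sqrt_of_sq_le
    exact le_trans hCS hvar
  calc |∑ ys : Fin n → T, (∏ i, w (ys i))
        * (Real.log ((a + ∑ i, g (ys i)) / (n + 1)) - Real.log Z)|
      ≤ ∑ ys : Fin n → T, |(∏ i, w (ys i))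
          * (Real.log ((a + ∑ i, g (ys i)) / (n + 1)) - Real.log Z)| :=
        Finset.abs_sum_le_sum_abs _ _
    _ ≤ ∑ ys : Fin n → T, (∏ i, w (ys i))
          * (|(a + ∑ i, g (ys i)) / ((n : ℝ) + 1) - Z| * Eb) := by
        apply Finset.sum_le_sum
        intro ys _
        rw [abs_mul, abs_of_nonneg (hW ys)]
        apply mul_le_mul_of_nonneg_left _ (hW ys)
        have h1 := logLip hε (hm ys) hZ1
        rwa [div_inv_eq_mul] at h1
    _ = Eb * ∑ ys : Fin n → T, (∏ i, w (ys i))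
          * |(a + ∑ i, g (ys i)) / ((n : ℝ) + 1) - Z| := by
        rw [Finset.mul_sum]
        apply Finset.sum_congr rfl
        intro ys _
        ring
    _ ≤ Eb * Real.sqrt (Eb ^ 2 / ((n : ℝ) + 1)) :=
        mul_le_mul_of_nonneg_left habs hEb0.le

end helpers

open Filter in
lemma bnd_tendsto (Eb : ℝ) : Filter.Tendsto (fun n : ℕ => Eb * Real.sqrt (Eb ^ 2 / ((n : ℝ) + 1)))
    Filter.atTop (nhds 0) := by
  have h1 : Tendsto (fun n : ℕ => Eb ^ 2 / ((n : ℝ) + 1)) atTop (nhds 0) := by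
    have h := (tendsto_const_div_atTop_nhds_zero_nat (Eb ^ 2)).comp (tendsto_add_atTop_nat 1)
    have e : (fun n : ℕ => Eb ^ 2 / ((n : ℝ) + 1)) = (fun n : ℕ => Eb ^ 2 / (n : ℝ)) ∘ (· + 1) := by
      funext n; simp [Function.comp]
    rw [e]
    exact h
  have h2 := h1.sqrt
  rw [Real.sqrt_zero] at h2
  have h3 := h2.const_mul Eb
  simpa using h3

/-- STATEMENT 16 (Asymptotic tightness: InfoNCE recovers the decoder bound as the number
of samples grows), with `K = n + 1 → ∞`. -/
theorem infonce_tendsto_dlb [Fintype S] [Fintype T] [Nonempty S] [Nonempty T]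
    (p : S × T → ℝ) (hp_pos : ∀ x, 0 < p x) (hp_sum : ∑ x, p x = 1)
    (h : S × T → ℝ) :
    Filter.Tendsto (fun n : ℕ => INCE p h n) Filter.atTop (nhds (IDLB p h)) ∧
    Filter.Tendsto
      (fun n : ℕ => ∑ z, ∑ y, ∑ ys : Fin n → T,
          p (z, y) * (∏ i, margT p (ys i)) * Real.log (mEst h n z y ys))
      Filter.atTop (nhds (∑ z, margS p z * Real.log (partFun p h z))) := by
  classical
  set B : ℝ := ∑ x, |h x| with hBdef
  have hB : ∀ x, |h x| ≤ B := fun x =>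
    Finset.single_le_sum (fun x _ => abs_nonneg (h x)) (Finset.mem_univ x)
  have hB0 : (0:ℝ) ≤ B := Finset.sum_nonneg fun x _ => abs_nonneg _
  set Eb : ℝ := Real.exp B with hEbdef
  have hEb : 1 ≤ Eb := Real.one_le_exp hB0
  have hEb0 : (0:ℝ) < Eb := lt_of_lt_of_le one_pos hEb
  have hw : ∀ y, 0 ≤ margT p y := fun y => Finset.sum_nonneg fun z _ => (hp_pos (z, y)).le
  have hw1 : ∑ y, margT p y = 1 := by
    simp only [margT]
    rw [Finset.sum_comm, ← Fintype.sum_prod_type]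
    exact hp_sum
  have hp1 : ∑ z, ∑ y, p (z, y) = 1 := by
    rw [← Fintype.sum_prod_type]; exact hp_sum
  have hexp1 : ∀ x : S × T, Eb⁻¹ ≤ Real.exp (h x) := by
    intro x
    rw [hEbdef, ← Real.exp_neg]
    exact Real.exp_le_exp.2 (neg_le_of_abs_le (hB x))
  have hexp2 : ∀ x : S × T, Real.exp (h x) ≤ Eb := fun x =>
    Real.exp_le_exp.2 (le_of_abs_le (hB x))
  have hkey : ∀ (n : ℕ) (z : S) (y : T),
      |(∑ ys : Fin n → T, (∏ i, margT p (ys i)) * Real.log (mEst h n z y ys))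
        - Real.log (partFun p h z)| ≤ Eb * Real.sqrt (Eb ^ 2 / ((n : ℝ) + 1)) := by
    intro n z y
    have hk := key (margT p) (fun y' => Real.exp (h (z, y'))) hw hw1 Eb hEb
      (fun y' => hexp1 (z, y')) (fun y' => hexp2 (z, y'))
      (Real.exp (h (z, y))) (hexp1 (z, y)) (hexp2 (z, y)) n
    simpa only [mEst, partFun] using hk
  set L : ℝ := ∑ z, margS p z * Real.log (partFun p h z) with hLdef
  set F : ℕ → ℝ := fun n => ∑ z, ∑ y, ∑ ys : Fin n → T,
      p (z, y) * (∏ i, margT p (ys i)) * Real.log (mEst h n z y ys) with hFdef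
  have hdiff : ∀ n : ℕ, F n - L = ∑ z, ∑ y, p (z, y) *
      ((∑ ys : Fin n → T, (∏ i, margT p (ys i)) * Real.log (mEst h n z y ys))
        - Real.log (partFun p h z)) := by
    intro n
    rw [hFdef, hLdef, ← Finset.sum_sub_distrib]
    apply Finset.sum_congr rfl
    intro z _
    rw [margS, Finset.sum_mul, ← Finset.sum_sub_distrib]
    apply Finset.sum_congr rfl
    intro y _
    rw [mul_sub, Finset.mul_sum]
    congr 1
    apply Finset.sum_congr rfl
    intro ys _
    ring
  have hFbound : ∀ n : ℕ, |F n - L| ≤ Eb * Real.sqrt (Eb ^ 2 / ((n : ℝ) + 1)) := by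
    intro n
    rw [hdiff n]
    calc |∑ z, ∑ y, p (z, y) *
        ((∑ ys : Fin n → T, (∏ i, margT p (ys i)) * Real.log (mEst h n z y ys))
          - Real.log (partFun p h z))|
        ≤ ∑ z, |∑ y, p (z, y) *
          ((∑ ys : Fin n → T, (∏ i, margT p (ys i)) * Real.log (mEst h n z y ys))
            - Real.log (partFun p h z))| := Finset.abs_sum_le_sum_abs _ _
      _ ≤ ∑ z, ∑ y, |p (z, y) *
          ((∑ ys : Fin n → T, (∏ i, margT p (ys i)) * Real.log (mEst h n z y ys))
            - Real.log (partFun p h z))| :=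
          Finset.sum_le_sum fun z _ => Finset.abs_sum_le_sum_abs _ _
      _ ≤ ∑ z, ∑ y, p (z, y) * (Eb * Real.sqrt (Eb ^ 2 / ((n : ℝ) + 1))) := by
          apply Finset.sum_le_sum
          intro z _
          apply Finset.sum_le_sum
          intro y _
          rw [abs_mul, abs_of_nonneg (hp_pos (z, y)).le]
          exact mul_le_mul_of_nonneg_left (hkey n z y) (hp_pos (z, y)).le
      _ = Eb * Real.sqrt (Eb ^ 2 / ((n : ℝ) + 1)) := by
          simp_rw [← Finset.sum_mul]
          rw [hp1, one_mul]
  have hF0 : Filter.Tendsto (fun n : ℕ => F n - L) Filter.atTop (nhds 0) := by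
    apply squeeze_zero_norm _ (bnd_tendsto Eb)
    intro n
    rw [Real.norm_eq_abs]
    exact hFbound n
  have hFL : Filter.Tendsto F Filter.atTop (nhds L) := by
    have h2 := hF0.add_const L
    simpa using h2
  have hEq : ∀ n : ℕ, INCE p h n = (∑ z, ∑ y, p (z, y) * h (z, y)) - F n := by
    intro n
    rw [INCE, hFdef, ← Finset.sum_sub_distrib]
    apply Finset.sum_congr rfl
    intro z _
    rw [← Finset.sum_sub_distrib]
    apply Finset.sum_congr rfl
    intro y _
    have hm0 : ∀ ys : Fin n → T, 0 < mEst h n z y ys := by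
      intro ys
      apply div_pos _ (by positivity)
      have hs : 0 ≤ ∑ i, Real.exp (h (z, ys i)) :=
        Finset.sum_nonneg fun i _ => (Real.exp_pos _).le
      nlinarith [Real.exp_pos (h (z, y))]
    have e : ∀ ys : Fin n → T, Real.log (Real.exp (h (z, y)) / mEst h n z y ys)
        = h (z, y) - Real.log (mEst h n z y ys) := by
      intro ys
      rw [Real.log_div (Real.exp_ne_zero _) (hm0 ys).ne', Real.log_exp]
    simp_rw [e, mul_sub]
    rw [Finset.sum_sub_distrib]
    congr 1
    calc ∑ ys : Fin n → T, p (z, y) * (∏ i, margT p (ys i)) * h (z, y)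
        = (p (z, y) * h (z, y)) * ∑ ys : Fin n → T, (∏ i, margT p (ys i)) := by
          rw [Finset.mul_sum]
          apply Finset.sum_congr rfl
          intro ys _
          ring
      _ = p (z, y) * h (z, y) := by rw [moment0 (margT p) hw1 n, mul_one]
  refine ⟨?_, hFL⟩
  have h2 : Filter.Tendsto (fun n : ℕ => (∑ z, ∑ y, p (z, y) * h (z, y)) - F n) Filter.atTop
      (nhds ((∑ z, ∑ y, p (z, y) * h (z, y)) - L)) := tendsto_const_nhds.sub hFL
  have e2 : IDLB p h = (∑ z, ∑ y, p (z, y) * h (z, y)) - L := rfl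
  rw [e2]
  exact h2.congr fun n => (hEq n).symm
end
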